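/- For all integers 0 ≤ k ≤ n, the de Moivre-type identity C_s(n,k) = ∑_{j=0}^{k} (-1)^j C(k, j) · C(n + k - s j, 2k) holds, where C(a, 2k) with integer upper argument a is taken to be 0 when a < 0 (and, as usual, when 0 ≤ a < 2k). -/
import Mathlib


/-- The quasi-bi^s-nomial coefficients `C_s(n,k)`. -/
def quasi (s : ℕ) : ℕ → ℤ → ℤ
  | 0, k => if k = 0 then 1 else 0
  | n+1, k =>
    if k < 0 ∨ (n+1 : ℤ) < k then 0
    else quasi s n k + ∑ j ∈ Finset.range s, if j ≤ n then quasi s (n - j) (k - 1) else 0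
  termination_by n _ => n
  decreasing_by all_goals omega

/-- Binomial coefficient `C(a,b)` with integer upper argument, zero when `a < 0`
(and, as usual, zero when `b > a ≥ 0`). -/
def ichoose (a : ℤ) (b : ℕ) : ℤ :=
  if a < 0 then 0 else (a.toNat.choose b : ℤ)

lemma ichoose_zero_of_lt {a : ℤ} {b : ℕ} (h : a < b) : ichoose a b = 0 := by
  unfold ichoose
  split
  · rfl
  · rename_i h'
    have : a.toNat < b := by omega
    simp [Nat.choose_eq_zero_of_lt this]

lemma ichoose_pascal (a : ℤ) (b : ℕ) :
    ichoose a (b+1) = ichoose (a-1) (b+1) + ichoose (a-1) b := by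
  rcases le_or_gt a 0 with h | h
  · rw [ichoose_zero_of_lt (by push_cast; omega), ichoose_zero_of_lt (by push_cast; omega),
      ichoose_zero_of_lt (by push_cast; omega)]
    ring
  · have ht : a.toNat = (a-1).toNat + 1 := by omega
    unfold ichoose
    rw [if_neg (by omega), if_neg (by omega), if_neg (by omega), ht, Nat.choose_succ_succ]
    push_cast
    ring

lemma ichoose_telescope (a : ℤ) (b : ℕ) (t : ℕ) :
    ichoose a (b+1) - ichoose (a - t) (b+1) = ∑ i ∈ Finset.range t, ichoose (a - 1 - i) b := by
  induction t with
  | zero => simp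
  | succ t ih =>
    rw [Finset.sum_range_succ, ← ih]
    have hp := ichoose_pascal (a - t) b
    rw [show a - (t:ℤ) - 1 = a - 1 - t by ring] at hp
    push_cast
    rw [show a - ((t:ℤ)+1) = a - 1 - t by ring]
    linarith [hp]

def G (s : ℕ) (m : ℤ) (k : ℕ) : ℤ :=
  ∑ j ∈ Finset.range (k+1), (-1:ℤ)^j * (k.choose j : ℤ) * ichoose (m + k - s*j) (2*k)

lemma G_zero_of_lt (s : ℕ) (m : ℤ) (k : ℕ) (h : m < k) : G s m k = 0 := by
  unfold G
  apply Finset.sum_eq_zero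
  intro j hj
  have h1 : (0:ℤ) ≤ (s:ℤ) * j := by positivity
  rw [ichoose_zero_of_lt (by push_cast; omega), mul_zero]

lemma alt_sum_pascal (c : ℕ) (f : ℕ → ℤ) :
    ∑ j ∈ Finset.range (c+2), (-1:ℤ)^j * ((c+1).choose j : ℤ) * f j
      = ∑ j ∈ Finset.range (c+1), (-1:ℤ)^j * (c.choose j : ℤ) * (f j - f (j+1)) := by
  have hC : ∑ j ∈ Finset.range (c+1), (-1:ℤ)^j * (c.choose (j+1) : ℤ) * f (j+1)
      = ∑ j ∈ Finset.range c, (-1:ℤ)^j * (c.choose (j+1) : ℤ) * f (j+1) := by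
    rw [Finset.sum_range_succ, Nat.choose_succ_self]
    simp
  have hA : ∑ j ∈ Finset.range (c+1), (-1:ℤ)^j * (c.choose j : ℤ) * f j
      = f 0 - ∑ j ∈ Finset.range c, (-1:ℤ)^j * (c.choose (j+1) : ℤ) * f (j+1) := by
    rw [Finset.sum_range_succ' (fun j => (-1:ℤ)^j * (c.choose j : ℤ) * f j) c]
    have : ∀ j, (-1:ℤ)^(j+1) * (c.choose (j+1) : ℤ) * f (j+1)
        = -((-1:ℤ)^j * (c.choose (j+1) : ℤ) * f (j+1)) := by intro j; ring
    simp only [this, Finset.sum_neg_distrib]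
    simp
    ring
  have hL : ∑ j ∈ Finset.range (c+2), (-1:ℤ)^j * ((c+1).choose j : ℤ) * f j
      = f 0 - ∑ j ∈ Finset.range (c+1), (-1:ℤ)^j * (c.choose j : ℤ) * f (j+1)
        - ∑ j ∈ Finset.range (c+1), (-1:ℤ)^j * (c.choose (j+1) : ℤ) * f (j+1) := by
    rw [Finset.sum_range_succ' (fun j => (-1:ℤ)^j * ((c+1).choose j : ℤ) * f j) (c+1)]
    have : ∀ j, (-1:ℤ)^(j+1) * ((c+1).choose (j+1) : ℤ) * f (j+1)
        = -((-1:ℤ)^j * (c.choose j : ℤ) * f (j+1)) - ((-1:ℤ)^j * (c.choose (j+1) : ℤ) * f (j+1)) := by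
      intro j
      rw [Nat.choose_succ_succ]
      push_cast
      ring
    simp only [this, Finset.sum_sub_distrib, Finset.sum_neg_distrib]
    simp
    ring
  rw [hL, hC]
  simp only [mul_sub, Finset.sum_sub_distrib]
  rw [hA]
  ring

lemma G_rec (s : ℕ) (m : ℤ) (c : ℕ) :
    G s m (c+1) = G s (m-1) (c+1) + ∑ i ∈ Finset.range s, G s (m-1-i) c := by
  have step1 : G s m (c+1) = G s (m-1) (c+1)
      + ∑ j ∈ Finset.range (c+2), (-1:ℤ)^j * ((c+1).choose j : ℤ)
          * ichoose (m + c - s*j) (2*c+1) := by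
    unfold G
    rw [← Finset.sum_add_distrib]
    apply Finset.sum_congr rfl
    intro j hj
    rw [show 2*(c+1) = (2*c+1)+1 by ring, ichoose_pascal]
    rw [show m + ((c+1:ℕ):ℤ) - (s:ℤ)*(j:ℤ) - 1 = m + c - s*j by push_cast; ring]
    rw [show (m-1) + ((c+1:ℕ):ℤ) - (s:ℤ)*(j:ℤ) = m + c - s*j by push_cast; ring]
    ring
  rw [step1, alt_sum_pascal c (fun j => ichoose (m + c - s*j) (2*c+1))]
  congr 1
  have key : ∀ j : ℕ, ichoose (m + c - s*j) (2*c+1) - ichoose (m + c - s*((j+1 : ℕ) : ℤ)) (2*c+1)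
      = ∑ i ∈ Finset.range s, ichoose (m - 1 - i + c - s*j) (2*c) := by
    intro j
    have := ichoose_telescope (m + c - s*j) (2*c) s
    rw [show m + (c:ℤ) - s*((j+1 : ℕ) : ℤ) = m + c - s*j - s by push_cast; ring]
    rw [this]
    apply Finset.sum_congr rfl
    intro i hi
    rw [show m + (c:ℤ) - s*j - 1 - i = m - 1 - i + c - s*j by ring]
  simp only [key, Finset.mul_sum]
  rw [Finset.sum_comm]
  unfold G
  rfl

lemma quasi_neg (s : ℕ) (m : ℕ) (k : ℤ) (h : k < 0) : quasi s m k = 0 := by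
  cases m with
  | zero => rw [quasi, if_neg (by omega)]
  | succ n => rw [quasi, if_pos (Or.inl h)]

lemma quasi_gt (s : ℕ) (m : ℕ) (k : ℤ) (h : (m : ℤ) < k) : quasi s m k = 0 := by
  cases m with
  | zero => rw [quasi, if_neg (by omega)]
  | succ n => rw [quasi, if_pos (Or.inr (by exact_mod_cast h))]

lemma quasi_eq_G (s : ℕ) : ∀ n k : ℕ, quasi s n (k : ℤ) = G s (n : ℤ) k := by
  intro n
  induction n using Nat.strong_induction_on with
  | _ n ih =>
    intro k
    match n with
    | 0 =>
      match k with
      | 0 => simp [quasi, G, ichoose]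
      | c+1 =>
        rw [quasi_gt s 0 _ (by push_cast; omega), G_zero_of_lt s _ _ (by push_cast; omega)]
    | n+1 =>
      by_cases hk : k ≤ n+1
      · rw [quasi, if_neg (by push_cast; omega)]
        match k with
        | 0 =>
          have hz : ∀ j ∈ Finset.range s,
              (if j ≤ n then quasi s (n - j) ((0:ℕ) - 1 : ℤ) else 0) = 0 := by
            intro j hj
            split
            · exact quasi_neg s _ _ (by omega)
            · rfl
          rw [Finset.sum_congr rfl hz]
          simp only [Finset.sum_const_zero, add_zero]
          rw [ih n (by omega) 0]
          unfold G
          simp [ichoose]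
          rw [if_neg (by omega), if_neg (by omega)]
        | c+1 =>
          have hq : quasi s n ((c+1 : ℕ) : ℤ) = G s (n : ℤ) (c+1) := ih n (by omega) (c+1)
          rw [hq]
          have hsum : ∀ j ∈ Finset.range s,
              (if j ≤ n then quasi s (n - j) (((c+1 : ℕ) : ℤ) - 1) else 0)
                = G s ((n : ℤ) - 1 - j + 1) c := by
            intro j hj
            have hc : ((c+1 : ℕ) : ℤ) - 1 = (c : ℤ) := by push_cast; ring
            rw [hc]
            split
            · rename_i hjn
              rw [ih (n - j) (by omega) c]
              congr 1
              push_cast [hjn]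
              ring
            · rename_i hjn
              rw [G_zero_of_lt s _ _ (by push_cast; omega)]
          rw [Finset.sum_congr rfl hsum]
          have := G_rec s ((n+1 : ℕ) : ℤ) c
          rw [this]
          congr 1
          · congr 1; push_cast; ring
          · apply Finset.sum_congr rfl
            intro i hi
            congr 1
            push_cast
            ring
      · rw [quasi_gt s (n+1) _ (by push_cast; omega),
          G_zero_of_lt s _ _ (by push_cast; omega)]

/-- The de Moivre-type identity: for `0 ≤ k ≤ n`,
`C_s(n,k) = ∑_{j=0}^{k} (-1)^j C(k,j) C(n + k - s j, 2k)`. -/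
theorem quasi_deMoivre (s n k : ℕ) (hs : 1 ≤ s) (hk : k ≤ n) :
    quasi s n (k : ℤ) =
      ∑ j ∈ Finset.range (k + 1),
        (-1 : ℤ) ^ j * (k.choose j : ℤ) * ichoose ((n : ℤ) + k - s * j) (2 * k) := by
  rw [quasi_eq_G]
  rfl
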